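/- Let π = (n_1,…,n_m) (m ≥ 2) be a partition of n, 0 < ρ ≤ 1, and O ∈ O(P_m). If μ is a constant such that ‖J‖₂ ≤ μ for all block Jacobi operators J ∈ J_O^{UBC_π(ρ)}, then ‖J̃‖₂ ≤ μ for all J̃ ∈ J_{O^←}^{UBC_π(ρ)}, where O^← is the reverse sequence and ‖·‖₂ is the spectral norm. The assertion also holds when, in both occurrences, the spectral norm is replaced by the spectral radius. -/

import Mathlib

namespace BlockJacobi

open scoped BigOperators

attribute [local instance] Classical.propDecidable

noncomputable section

/-- Offset (starting index) of block `r` for the partition `c`. -/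
def off (c : ℕ → ℕ) (r : ℕ) : ℕ := ∑ k ∈ Finset.range r, c k

/-- `t` belongs to block `r`. -/
def inBlk (c : ℕ → ℕ) (r t : ℕ) : Prop := off c r ≤ t ∧ t < off c r + c r

/-- `s` and `t` belong to the same block (among the first `m` blocks). -/
def sameBlk (c : ℕ → ℕ) (m s t : ℕ) : Prop := ∃ r, r < m ∧ inBlk c r s ∧ inBlk c r t

/-- `t` belongs to the pivot zone: block `i` or block `j`. -/
def inPiv (c : ℕ → ℕ) (i j t : ℕ) : Prop := inBlk c i t ∨ inBlk c j t

/-- `(c, m)` is a partition of `n` into `m` blocks (0-based blocks `0,…,m-1`). -/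
def IsPartition (n m : ℕ) (c : ℕ → ℕ) : Prop :=
  2 ≤ m ∧ (∀ i < m, 1 ≤ c i) ∧ ∑ i ∈ Finset.range m, c i = n

/-- elementary block matrix with (0-based) pivot pair `(i,j)`. -/
def IsElem {n : ℕ} (c : ℕ → ℕ) (i j : ℕ) (U : Matrix (Fin n) (Fin n) ℝ) : Prop :=
  ∀ s t : Fin n, ¬(inPiv c i j (s : ℕ) ∧ inPiv c i j (t : ℕ)) →
    U s t = if s = t then 1 else 0

/-- orthogonality. -/
def Orth {n : ℕ} (U : Matrix (Fin n) (Fin n) ℝ) : Prop := U.transpose * U = 1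

/-- Euclidean norm of a vector. -/
def enorm {ι : Type*} [Fintype ι] (x : ι → ℝ) : ℝ := Real.sqrt (∑ i, x i ^ 2)

/-- smallest singular value of the `(r,r)` diagonal block of `U`. -/
def sigmaMinBlk {n : ℕ} (c : ℕ → ℕ) (r : ℕ) (U : Matrix (Fin n) (Fin n) ℝ) : ℝ :=
  sInf { v : ℝ | ∃ x : Fin n → ℝ,
    (∀ t : Fin n, ¬ inBlk c r (t : ℕ) → x t = 0) ∧ enorm x = 1 ∧
    enorm (fun t : Fin n => if inBlk c r (t : ℕ) then U.mulVec x t else 0) = v }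

/-- the constant `γ_{ij}` of the UBC class. -/
def gammaUBC (c : ℕ → ℕ) (i j : ℕ) : ℝ :=
  3 / Real.sqrt (((4 : ℝ) ^ c i + 6 * (c j : ℝ) - 1) * ((c j : ℝ) + 1))

/-- `U` is in the UBC class with pivot pair `(i,j)`: block structure given by `cs`,
`γ`-bound computed from the partition `cg`. -/
def IsUBC2 {n : ℕ} (cs cg : ℕ → ℕ) (ρ : ℝ) (i j : ℕ) (U : Matrix (Fin n) (Fin n) ℝ) : Prop :=
  IsElem cs i j U ∧ Orth U ∧ sigmaMinBlk cs i U = sigmaMinBlk cs j U ∧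
    ρ * gammaUBC cg i j ≤ sigmaMinBlk cs i U

/-- `U ∈ UBC_π(ρ)` with pivot pair `(i,j)`. -/
def IsUBC {n : ℕ} (c : ℕ → ℕ) (ρ : ℝ) (i j : ℕ) (U : Matrix (Fin n) (Fin n) ℝ) : Prop :=
  IsUBC2 c c ρ i j U

/-- the `(i,j)` pivot submatrix of `A` is diagonal. -/
def PivDiag {n : ℕ} (c : ℕ → ℕ) (i j : ℕ) (A : Matrix (Fin n) (Fin n) ℝ) : Prop :=
  ∀ s t : Fin n, s ≠ t → inPiv c i j (s : ℕ) → inPiv c i j (t : ℕ) → A s t = 0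

/-- square of the off-norm `S(A)`. -/
def offSq {n : ℕ} (A : Matrix (Fin n) (Fin n) ℝ) : ℝ :=
  ∑ s : Fin n, ∑ t : Fin n, if (s : ℕ) < (t : ℕ) then A s t ^ 2 else 0

/-- square of the off-norm of the `(i,j)` pivot submatrix of `A`. -/
def offSqPiv {n : ℕ} (c : ℕ → ℕ) (i j : ℕ) (A : Matrix (Fin n) (Fin n) ℝ) : ℝ :=
  ∑ s : Fin n, ∑ t : Fin n,
    if (s : ℕ) < (t : ℕ) ∧ inPiv c i j (s : ℕ) ∧ inPiv c i j (t : ℕ) then A s t ^ 2 else 0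

/-- Frobenius norm. -/
def frob {n : ℕ} (A : Matrix (Fin n) (Fin n) ℝ) : ℝ :=
  Real.sqrt (∑ s : Fin n, ∑ t : Fin n, A s t ^ 2)

/-- One sweep of the block Jacobi method along the pivot list `L`; block structure from
`cs`, UBC bound computed from the partition `cg`. -/
def Sweep2 {n : ℕ} (cs cg : ℕ → ℕ) (ρ : ℝ) (L : List (ℕ × ℕ))
    (A A' : Matrix (Fin n) (Fin n) ℝ) : Prop :=
  ∃ B : ℕ → Matrix (Fin n) (Fin n) ℝ,
    B 0 = A ∧ B L.length = A' ∧
    ∀ (k : ℕ) (hk : k < L.length),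
      ∃ U : Matrix (Fin n) (Fin n) ℝ,
        IsUBC2 cs cg ρ (L.get ⟨k, hk⟩).1 (L.get ⟨k, hk⟩).2 U ∧
        B (k + 1) = U.transpose * B k * U ∧
        PivDiag cs (L.get ⟨k, hk⟩).1 (L.get ⟨k, hk⟩).2 (B (k + 1))

/-- One sweep of the block Jacobi method with `UBC_π(ρ)` transformations. -/
def Sweep {n : ℕ} (c : ℕ → ℕ) (ρ : ℝ) (L : List (ℕ × ℕ))
    (A A' : Matrix (Fin n) (Fin n) ℝ) : Prop :=
  Sweep2 c c ρ L A A'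

/-- `L ∈ O(P_m)` (0-based pairs). -/
def SeqOn (m : ℕ) (L : List (ℕ × ℕ)) : Prop :=
  (∀ p ∈ L, p.1 < p.2 ∧ p.2 < m) ∧ ∀ i j : ℕ, i < j → j < m → (i, j) ∈ L

/-- `L ∈ O(S)` for `S ⊆ P_m`. -/
def SeqOnSet (S : Set (ℕ × ℕ)) (L : List (ℕ × ℕ)) : Prop :=
  (∀ p ∈ L, p ∈ S) ∧ ∀ p ∈ S, p ∈ L

/-- the class `B_c^(m)` of column-wise orderings (0-based). -/
def memBc (m : ℕ) (L : List (ℕ × ℕ)) : Prop :=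
  ∃ τ : ℕ → ℕ → ℕ,
    (∀ j, Set.BijOn (τ j) (Set.Iio j) (Set.Iio j)) ∧
    L = (List.range' 1 (m - 1)).flatMap fun j => (List.range j).map fun a => (τ j a, j)

/-- the class `B_r^(m)` of row-wise orderings (0-based). -/
def memBr (m : ℕ) (L : List (ℕ × ℕ)) : Prop :=
  ∃ σ : ℕ → ℕ → ℕ,
    (∀ i, Set.BijOn (σ i) (Set.Ico (i + 1) m) (Set.Ico (i + 1) m)) ∧
    L = ((List.range (m - 1)).reverse).flatMap fun i =>
      (List.range' (i + 1) (m - 1 - i)).map fun b => (i, σ i b)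

/-- the class `B_sp^(m)` of serial orderings with permutations. -/
def memBsp (m : ℕ) (L : List (ℕ × ℕ)) : Prop :=
  memBc m L ∨ memBc m L.reverse ∨ memBr m L ∨ memBr m L.reverse

/-- the quasi-cyclic class `B̄_c^(m)`. -/
def memBcQ (m : ℕ) (L : List (ℕ × ℕ)) : Prop :=
  ∃ (τ : ℕ → ℕ → ℕ) (E : ℕ → List (ℕ × ℕ)),
    (∀ j, Set.BijOn (τ j) (Set.Iio j) (Set.Iio j)) ∧
    (∀ j, ∀ p ∈ E j, p.1 < p.2 ∧ p.2 ≤ j) ∧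
    L = (List.range' 1 (m - 1)).flatMap fun j =>
      ((List.range j).map fun a => (τ j a, j)) ++ (if j = 1 then [] else E j)

/-- one admissible transposition (on lists of `α`'s carrying pairs via `pr`). -/
def AdjSwapG {α : Type*} (pr : α → ℕ × ℕ) (L L' : List α) : Prop :=
  ∃ (l₁ l₂ : List α) (a b : α),
    ({(pr a).1, (pr a).2} ∩ {(pr b).1, (pr b).2} : Set ℕ) = ∅ ∧
    L = l₁ ++ a :: b :: l₂ ∧ L' = l₁ ++ b :: a :: l₂

/-- equivalence (finitely many admissible transpositions). -/
def EquivG {α : Type*} (pr : α → ℕ × ℕ) : List α → List α → Prop :=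
  Relation.ReflTransGen (AdjSwapG pr)

/-- shift-equivalence. -/
def ShiftG {α : Type*} (L L' : List α) : Prop :=
  ∃ l₁ l₂ : List α, L = l₁ ++ l₂ ∧ L' = l₂ ++ l₁

/-- weak equivalence. -/
def WeakG {α : Type*} (pr : α → ℕ × ℕ) : List α → List α → Prop :=
  Relation.ReflTransGen fun X Y => EquivG pr X Y ∨ ShiftG X Y

/-- equivalence of pivot sequences. -/
def PEquivL : List (ℕ × ℕ) → List (ℕ × ℕ) → Prop := EquivG id

/-- shift-equivalence of pivot sequences. -/
def ShiftEq : List (ℕ × ℕ) → List (ℕ × ℕ) → Prop := ShiftG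

/-- weak equivalence of pivot sequences. -/
def WeakEq : List (ℕ × ℕ) → List (ℕ × ℕ) → Prop := WeakG id

/-- weak equivalence realized by a chain containing exactly `d` shift-equivalent
adjacent pairs (all other adjacent pairs being equivalent). -/
def WeakChainD (d : ℕ) (L L' : List (ℕ × ℕ)) : Prop :=
  ∃ (r : ℕ) (cs : ℕ → List (ℕ × ℕ)) (s : Finset ℕ),
    cs 0 = L ∧ cs r = L' ∧ s.card = d ∧ (∀ k ∈ s, k < r) ∧
    ∀ k < r, if k ∈ s then ShiftEq (cs k) (cs (k + 1)) else PEquivL (cs k) (cs (k + 1))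

/-- `q` is a permutation of `{0,…,m-1}`. -/
def IsPermOn (m : ℕ) (q : ℕ → ℕ) : Prop := Set.BijOn q (Set.Iio m) (Set.Iio m)

/-- `O(q)`: apply a permutation to all pairs of the sequence. -/
def pApply (q : ℕ → ℕ) (L : List (ℕ × ℕ)) : List (ℕ × ℕ) :=
  L.map fun p => if q p.1 < q p.2 then (q p.1, q p.2) else (q p.2, q p.1)

/-- `compSeq q t = q_t ∘ q_{t-1} ∘ ⋯ ∘ q_1`. -/
def compSeq (q : ℕ → ℕ → ℕ) : ℕ → ℕ → ℕ
  | 0 => id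
  | t + 1 => q (t + 1) ∘ compSeq q t

/-- the class `B_spg^(m)`. -/
def memBspg (m : ℕ) (L : List (ℕ × ℕ)) : Prop :=
  ∃ L' L'' : List (ℕ × ℕ), memBsp m L'' ∧
    ((∃ q, IsPermOn m q ∧ L' = pApply q L) ∧ PEquivL L' L'' ∨
      PEquivL L L' ∧ ∃ q, IsPermOn m q ∧ L'' = pApply q L')

/-- the class `B_sg^(m)` of generalized serial orderings. -/
def memBsg (m : ℕ) (L : List (ℕ × ℕ)) : Prop :=
  ∃ L' L'' : List (ℕ × ℕ), memBsp m L'' ∧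
    ((∃ q, IsPermOn m q ∧ L' = pApply q L) ∧ WeakEq L' L'' ∨
      WeakEq L L' ∧ ∃ q, IsPermOn m q ∧ L'' = pApply q L')

/-- index set of the entries of the off-diagonal blocks in the upper triangle;
it has cardinality `K`. -/
def OffI (n m : ℕ) (c : ℕ → ℕ) : Type :=
  { p : Fin n × Fin n // (p.1 : ℕ) < (p.2 : ℕ) ∧ ¬ sameBlk c m (p.1 : ℕ) (p.2 : ℕ) }

instance (n m : ℕ) (c : ℕ → ℕ) : Fintype (OffI n m c) := by
  unfold OffI; exact Subtype.fintype _

instance (n m : ℕ) (c : ℕ → ℕ) : DecidableEq (OffI n m c) := Classical.decEq _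

/-- `vec_{π,0}⁻¹` : the symmetric matrix with zero diagonal blocks built from a vector. -/
def symOf {n m : ℕ} {c : ℕ → ℕ} (a : OffI n m c → ℝ) : Matrix (Fin n) (Fin n) ℝ :=
  fun s t =>
    if h : (s : ℕ) < (t : ℕ) ∧ ¬ sameBlk c m (s : ℕ) (t : ℕ) then a ⟨(s, t), h⟩
    else if h' : (t : ℕ) < (s : ℕ) ∧ ¬ sameBlk c m (t : ℕ) (s : ℕ) then a ⟨(t, s), h'⟩
    else 0

/-- `N_{ij}` : set the pivot submatrix to zero. -/
def nij {n : ℕ} (c : ℕ → ℕ) (i j : ℕ) (M : Matrix (Fin n) (Fin n) ℝ) :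
    Matrix (Fin n) (Fin n) ℝ :=
  fun s t => if inPiv c i j (s : ℕ) ∧ inPiv c i j (t : ℕ) then 0 else M s t

/-- the block Jacobi annihilator `R_{ij}(Û)` (as a `K×K` matrix), parametrized by the
full elementary block matrix `U` with pivot pair `(i,j)` and pivot submatrix `Û`. -/
def annih (n m : ℕ) (c : ℕ → ℕ) (i j : ℕ) (U : Matrix (Fin n) (Fin n) ℝ) :
    Matrix (OffI n m c) (OffI n m c) ℝ :=
  fun p q => nij c i j (U.transpose * symOf (Pi.single q (1 : ℝ)) * U) p.1.1 p.1.2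

/-- the class `I_{ij}` of block Jacobi annihilators. -/
def Iij (n m : ℕ) (c : ℕ → ℕ) (i j : ℕ) : Set (Matrix (OffI n m c) (OffI n m c) ℝ) :=
  { R | ∃ U : Matrix (Fin n) (Fin n) ℝ, IsElem c i j U ∧ Orth U ∧ R = annih n m c i j U }

/-- the class `I_{ij}^{UBC(ρ)}`. -/
def IijUBC (n m : ℕ) (c : ℕ → ℕ) (ρ : ℝ) (i j : ℕ) :
    Set (Matrix (OffI n m c) (OffI n m c) ℝ) :=
  { R | ∃ U : Matrix (Fin n) (Fin n) ℝ, IsUBC c ρ i j U ∧ R = annih n m c i j U }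

/-- the class `J_O^{UBC_π(ρ)}` of block Jacobi operators. -/
def JopUBC (n m : ℕ) (c : ℕ → ℕ) (ρ : ℝ) (L : List (ℕ × ℕ)) :
    Set (Matrix (OffI n m c) (OffI n m c) ℝ) :=
  { J | ∃ R : ℕ → Matrix (OffI n m c) (OffI n m c) ℝ,
      (∀ (k : ℕ) (hk : k < L.length),
        R k ∈ IijUBC n m c ρ (L.get ⟨k, hk⟩).1 (L.get ⟨k, hk⟩).2) ∧
      J = (((List.range L.length).reverse).map R).prod }

/-- spectral norm (operator 2-norm). -/
def specNorm {ι : Type*} [Fintype ι] (M : Matrix ι ι ℝ) : ℝ :=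
  sSup { v : ℝ | ∃ x : ι → ℝ, enorm x = 1 ∧ enorm (M.mulVec x) = v }

/-- spectral radius. -/
def specRad {ι : Type*} [Fintype ι] (M : Matrix ι ι ℝ) : ℝ :=
  sSup { v : ℝ | ∃ (μ : ℂ) (x : ι → ℂ), x ≠ 0 ∧
    (M.map (fun r : ℝ => (r : ℂ))).mulVec x = μ • x ∧ v = ‖μ‖ }

/-- product `R_{T-1} ⋯ R_1 R_0` of a decorated pivot list. -/
def prodD {n m : ℕ} {c : ℕ → ℕ}
    (L : List ((ℕ × ℕ) × Matrix (OffI n m c) (OffI n m c) ℝ)) :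
    Matrix (OffI n m c) (OffI n m c) ℝ :=
  ((L.map Prod.snd).reverse).prod

/-- plane (Givens) rotation in the `(i,j)` coordinate plane. -/
def rotM (n : ℕ) (i j : ℕ) (φ : ℝ) : Matrix (Fin n) (Fin n) ℝ :=
  fun s t =>
    if (s : ℕ) = i ∧ (t : ℕ) = i then Real.cos φ
    else if (s : ℕ) = j ∧ (t : ℕ) = j then Real.cos φ
    else if (s : ℕ) = i ∧ (t : ℕ) = j then - Real.sin φ
    else if (s : ℕ) = j ∧ (t : ℕ) = i then Real.sin φ
    else if s = t then 1 else 0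

/-- One sweep of the scalar (element-wise) cyclic Jacobi method with rotation
angles in `[-π/4, π/4]`. -/
def ScalarSweep {n : ℕ} (L : List (ℕ × ℕ)) (A A' : Matrix (Fin n) (Fin n) ℝ) : Prop :=
  ∃ (B : ℕ → Matrix (Fin n) (Fin n) ℝ) (φ : ℕ → ℝ),
    B 0 = A ∧ B L.length = A' ∧
    ∀ (k : ℕ) (hk : k < L.length),
      |φ k| ≤ Real.pi / 4 ∧
      B (k + 1) =
        (rotM n (L.get ⟨k, hk⟩).1 (L.get ⟨k, hk⟩).2 (φ k)).transpose * B k *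
          rotM n (L.get ⟨k, hk⟩).1 (L.get ⟨k, hk⟩).2 (φ k) ∧
      ∀ s t : Fin n, (s : ℕ) = (L.get ⟨k, hk⟩).1 → (t : ℕ) = (L.get ⟨k, hk⟩).2 →
        B (k + 1) s t = 0

/-- `k` concatenated copies of a list. -/
def iterList {α : Type*} : ℕ → List α → List α
  | 0, _ => []
  | k + 1, L => L ++ iterList k L


/-!
Transposition maps `J_{O^←}^{UBC_π(ρ)}` into `J_O^{UBC_π(ρ)}`: transposing a product reverses
the order of its factors, `R_ij(Û)ᵀ = R_ij(Ûᵀ)`, and `Ûᵀ` is again in `UBC_π(ρ)` because its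
diagonal blocks are the transposes of those of `Û`, and a square matrix and its transpose have the
same smallest singular value. A real matrix and its transpose have the same spectral norm and the
same eigenvalues.
-/

open Matrix

lemma mul_norm_le_norm_apply_of_forall_sphere {E F : Type*} [NormedAddCommGroup E]
    [NormedSpace ℝ E] [NormedAddCommGroup F] [NormedSpace ℝ F] {f : E →L[ℝ] F} {s : ℝ}
    (h : ∀ x ∈ Metric.sphere (0 : E) 1, s ≤ ‖f x‖) (x : E) : s * ‖x‖ ≤ ‖f x‖ := by
  rcases eq_or_ne x 0 with rfl | hx
  · simp
  have hpos : 0 < ‖x‖ := norm_pos_iff.mpr hx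
  have hunit := h (‖x‖⁻¹ • x) (by simp [norm_smul, hpos.ne'])
  rw [map_smul, norm_smul, norm_inv, norm_norm, le_inv_mul_iff₀ hpos] at hunit
  linarith

section AdjointLowerBound

variable {E : Type*} [NormedAddCommGroup E] [InnerProductSpace ℝ E] [FiniteDimensional ℝ E]

/-- The lower bound makes `f` invertible; writing `x = f y`, the bound transfers to the adjoint
through `‖x‖² = ⟪f† x, y⟫ ≤ ‖f† x‖ ‖y‖`. -/
lemma mul_norm_le_norm_adjoint_apply {f : E →L[ℝ] E} {s : ℝ}
    (h : ∀ x, s * ‖x‖ ≤ ‖f x‖) (x : E) : s * ‖x‖ ≤ ‖f.adjoint x‖ := by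
  rcases le_or_gt s 0 with hs | hs
  · exact (mul_nonpos_of_nonpos_of_nonneg hs (norm_nonneg x)).trans (norm_nonneg _)
  have hinj : Function.Injective (f : E →ₗ[ℝ] E) := by
    refine (injective_iff_map_eq_zero _).mpr fun y hy => norm_le_zero_iff.mp ?_
    have hbound := h y
    rw [show f y = 0 from hy, norm_zero] at hbound
    nlinarith [norm_nonneg y]
  obtain ⟨y, rfl⟩ := LinearMap.injective_iff_surjective.mp hinj x
  have hy := h y
  have hinner : ‖f y‖ ^ 2 ≤ ‖f.adjoint (f y)‖ * ‖y‖ := by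
    rw [← real_inner_self_eq_norm_sq, ← f.adjoint_inner_left]
    exact real_inner_le_norm _ _
  change s * ‖f y‖ ≤ ‖f.adjoint (f y)‖
  rcases (norm_nonneg (f y)).eq_or_lt with h0 | hpos
  · rw [← h0, mul_zero]; exact norm_nonneg _
  refine le_of_mul_le_mul_right ?_ hpos
  nlinarith [norm_nonneg (f.adjoint (f y))]

lemma sInf_image_norm_sphere_le_adjoint (f : E →L[ℝ] E) :
    sInf ((fun x => ‖f x‖) '' Metric.sphere 0 1)
      ≤ sInf ((fun x => ‖f.adjoint x‖) '' Metric.sphere 0 1) := by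
  cases subsingleton_or_nontrivial E
  · simp [Metric.sphere_eq_empty_of_subsingleton one_ne_zero]
  have hbdd : BddBelow ((fun x => ‖f x‖) '' Metric.sphere 0 1) :=
    ⟨0, by rintro - ⟨x, -, rfl⟩; exact norm_nonneg _⟩
  have hlower := mul_norm_le_norm_adjoint_apply
    (mul_norm_le_norm_apply_of_forall_sphere fun x hx => csInf_le hbdd ⟨x, hx, rfl⟩)
  refine le_csInf ((NormedSpace.sphere_nonempty.mpr zero_le_one).image _) ?_
  rintro - ⟨x, hx, rfl⟩
  simpa [mem_sphere_zero_iff_norm.mp hx] using hlower x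

lemma sInf_image_norm_sphere_adjoint (f : E →L[ℝ] E) :
    sInf ((fun x => ‖f.adjoint x‖) '' Metric.sphere 0 1)
      = sInf ((fun x => ‖f x‖) '' Metric.sphere 0 1) := by
  refine le_antisymm ?_ (sInf_image_norm_sphere_le_adjoint f)
  simpa using sInf_image_norm_sphere_le_adjoint f.adjoint

end AdjointLowerBound

section MatrixNorms

open WithLp
open scoped Matrix.Norms.L2Operator

variable {ι : Type*} [Fintype ι]

lemma enorm_eq_norm_toLp (x : ι → ℝ) : enorm x = ‖toLp 2 x‖ := by
  simp [enorm, EuclideanSpace.norm_eq]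

lemma setOf_enorm_mulVec_eq_image [DecidableEq ι] (M : Matrix ι ι ℝ) :
    { v : ℝ | ∃ x : ι → ℝ, enorm x = 1 ∧ enorm (M *ᵥ x) = v }
      = (fun x => ‖toEuclideanCLM (𝕜 := ℝ) M x‖) '' Metric.sphere 0 1 := by
  ext v
  constructor
  · rintro ⟨x, hx, rfl⟩
    exact ⟨toLp 2 x, by simpa [enorm_eq_norm_toLp] using hx, by simp [enorm_eq_norm_toLp]⟩
  · rintro ⟨x, hx, rfl⟩
    exact ⟨ofLp x, by simpa [enorm_eq_norm_toLp] using hx, by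
      rw [enorm_eq_norm_toLp, ← toEuclideanCLM_toLp, toLp_ofLp]⟩

lemma toEuclideanCLM_transpose [DecidableEq ι] (M : Matrix ι ι ℝ) :
    toEuclideanCLM (𝕜 := ℝ) Mᵀ = (toEuclideanCLM (𝕜 := ℝ) M).adjoint := by
  rw [← conjTranspose_eq_transpose_of_trivial, ← star_eq_conjTranspose, map_star,
    ContinuousLinearMap.star_eq_adjoint]

lemma specNorm_eq_l2_opNorm [DecidableEq ι] (M : Matrix ι ι ℝ) : specNorm M = ‖M‖ := by
  rw [specNorm, setOf_enorm_mulVec_eq_image, ContinuousLinearMap.sSup_sphere_eq_norm,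
    l2_opNorm_toEuclideanCLM]

lemma specNorm_transpose (M : Matrix ι ι ℝ) : specNorm Mᵀ = specNorm M := by
  classical
  rw [specNorm_eq_l2_opNorm, specNorm_eq_l2_opNorm, ← conjTranspose_eq_transpose_of_trivial,
    l2_opNorm_conjTranspose]

lemma sInf_enorm_mulVec_transpose (M : Matrix ι ι ℝ) :
    sInf { v : ℝ | ∃ x : ι → ℝ, enorm x = 1 ∧ enorm (Mᵀ *ᵥ x) = v }
      = sInf { v : ℝ | ∃ x : ι → ℝ, enorm x = 1 ∧ enorm (M *ᵥ x) = v } := by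
  classical
  rw [setOf_enorm_mulVec_eq_image, setOf_enorm_mulVec_eq_image, toEuclideanCLM_transpose,
    sInf_image_norm_sphere_adjoint]

end MatrixNorms

section SpectralRadius

variable {ι : Type*} [Fintype ι]

lemma exists_mulVec_eq_smul_iff_det_eq_zero {K : Type*} [Field K] [DecidableEq ι]
    (C : Matrix ι ι K) (μ : K) :
    (∃ x ≠ 0, C *ᵥ x = μ • x) ↔ (C - μ • 1).det = 0 := by
  simp only [← exists_mulVec_eq_zero_iff, sub_mulVec, smul_mulVec, one_mulVec, sub_eq_zero]

lemma specRad_transpose (M : Matrix ι ι ℝ) : specRad Mᵀ = specRad M := by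
  classical
  simp only [specRad, transpose_map]
  set C := M.map ((↑) : ℝ → ℂ)
  congr 1
  ext v
  refine exists_congr fun μ => ?_
  have hdet : (Cᵀ - μ • 1).det = (C - μ • 1).det := by
    rw [← det_transpose, transpose_sub, transpose_transpose, transpose_smul, transpose_one]
  have heig := exists_mulVec_eq_smul_iff_det_eq_zero Cᵀ μ
  rw [hdet, ← exists_mulVec_eq_smul_iff_det_eq_zero] at heig
  simp only [← and_assoc, exists_and_right, heig]

end SpectralRadius

section Restriction

variable {ι : Type*} [Fintype ι] {p : ι → Prop} [DecidablePred p]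

lemma sum_subtype_eq_sum_of_support {M : Type*} [AddCommMonoid M] {g : ι → M}
    (hg : ∀ t, ¬ p t → g t = 0) :
    ∑ t : Subtype p, g t = ∑ t, g t := by
  rw [← Fintype.sum_subtype_add_sum_subtype p g,
    Finset.sum_eq_zero fun (t : {t // ¬ p t}) _ => hg t t.2, add_zero]

lemma enorm_comp_val {x : ι → ℝ} (hx : ∀ t, ¬ p t → x t = 0) :
    enorm (fun t : Subtype p => x t) = enorm x := by
  unfold enorm
  rw [sum_subtype_eq_sum_of_support (g := fun t => x t ^ 2) fun t ht => by simp [hx t ht]]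

lemma enorm_indicator (w : ι → ℝ) :
    enorm (fun t => if p t then w t else 0) = enorm (fun t : Subtype p => w t) := by
  rw [← enorm_comp_val (p := p) fun t ht => if_neg ht]
  congr with t
  exact if_pos t.2

lemma submatrix_val_mulVec_comp_val (U : Matrix ι ι ℝ) {x : ι → ℝ}
    (hx : ∀ t, ¬ p t → x t = 0) :
    (U.submatrix (↑) (↑) : Matrix (Subtype p) (Subtype p) ℝ) *ᵥ (fun t : Subtype p => x t)
      = fun t : Subtype p => (U *ᵥ x) t := by
  ext s
  exact sum_subtype_eq_sum_of_support (g := fun t => U s t * x t) fun t ht => by simp [hx t ht]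

lemma setOf_enorm_indicator_mulVec_eq (U : Matrix ι ι ℝ) :
    { v : ℝ | ∃ x : ι → ℝ, (∀ t, ¬ p t → x t = 0) ∧ enorm x = 1 ∧
        enorm (fun t => if p t then (U *ᵥ x) t else 0) = v }
      = { v : ℝ | ∃ y : Subtype p → ℝ, enorm y = 1 ∧
        enorm ((U.submatrix (↑) (↑) : Matrix (Subtype p) (Subtype p) ℝ) *ᵥ y) = v } := by
  ext v
  constructor
  · rintro ⟨x, hx, hx1, rfl⟩
    exact ⟨fun t : Subtype p => x t, (enorm_comp_val hx).trans hx1,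
      by rw [submatrix_val_mulVec_comp_val U hx, enorm_indicator]⟩
  · rintro ⟨y, hy1, rfl⟩
    let x : ι → ℝ := fun t => if h : p t then y ⟨t, h⟩ else 0
    have hx : ∀ t, ¬ p t → x t = 0 := fun t ht => dif_neg ht
    have hxy : (fun t : Subtype p => x t) = y := funext fun t => dif_pos t.2
    refine ⟨x, hx, by rw [← enorm_comp_val hx, hxy, hy1], ?_⟩
    rw [enorm_indicator, ← submatrix_val_mulVec_comp_val U hx, hxy]

end Restriction

lemma sigmaMinBlk_transpose {n : ℕ} (c : ℕ → ℕ) (r : ℕ) (U : Matrix (Fin n) (Fin n) ℝ) :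
    sigmaMinBlk c r Uᵀ = sigmaMinBlk c r U := by
  rw [sigmaMinBlk, sigmaMinBlk, setOf_enorm_indicator_mulVec_eq,
    setOf_enorm_indicator_mulVec_eq, ← Matrix.transpose_submatrix, sInf_enorm_mulVec_transpose]

section ElementaryTranspose

variable {n : ℕ} {c : ℕ → ℕ} {i j : ℕ} {U : Matrix (Fin n) (Fin n) ℝ}

lemma IsElem.transpose (hU : IsElem c i j U) : IsElem c i j Uᵀ := by
  intro s t hst
  rw [transpose_apply, hU t s fun h => hst h.symm]
  exact if_congr eq_comm rfl rfl

lemma Orth.transpose (hU : Orth U) : Orth Uᵀ := by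
  rw [Orth, transpose_transpose]
  exact mul_eq_one_comm.mp hU

lemma IsUBC.transpose {ρ : ℝ} (hU : IsUBC c ρ i j U) : IsUBC c ρ i j Uᵀ := by
  obtain ⟨hElem, hOrth, hEq, hBound⟩ := hU
  refine ⟨hElem.transpose, hOrth.transpose, ?_, ?_⟩
  · rwa [sigmaMinBlk_transpose, sigmaMinBlk_transpose]
  · rwa [sigmaMinBlk_transpose]

lemma IsElem.apply_eq_zero (hU : IsElem c i j U) {a b : Fin n}
    (h : inPiv c i j a ↔ ¬ inPiv c i j b) : U a b = 0 := by
  rw [hU a b (by tauto)]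
  refine if_neg fun hab => ?_
  subst hab
  tauto

end ElementaryTranspose

lemma transpose_mul_single_mul_apply {ι : Type*} [Fintype ι] [DecidableEq ι]
    (A B : Matrix ι ι ℝ) (a b s t : ι) : (Aᵀ * single a b (1 : ℝ) * B) s t = A a s * B b t := by
  simp [Matrix.mul_apply, single_apply, ite_and, Finset.sum_ite_eq]

section Annihilator

variable {n m : ℕ} {c : ℕ → ℕ} {i j : ℕ}

lemma single_one_apply_offI (q p : OffI n m c) :
    (Pi.single q 1 : OffI n m c → ℝ) p = if p.1 = q.1 then 1 else 0 := by
  rw [Pi.single_apply]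
  exact if_congr Subtype.ext_iff rfl rfl

lemma symOf_apply_val (a : OffI n m c → ℝ) (p : OffI n m c) : symOf a p.1.1 p.1.2 = a p :=
  dif_pos p.2

lemma symOf_apply_val_swap (a : OffI n m c → ℝ) (p : OffI n m c) :
    symOf a p.1.2 p.1.1 = a p := by
  rw [symOf, dif_neg fun h => lt_asymm h.1 p.2.1, dif_pos p.2]
  rfl

lemma symOf_single_apply_of_ne (q : OffI n m c) {s t : Fin n} (hst : (s, t) ≠ q.1)
    (hts : (t, s) ≠ q.1) : symOf (Pi.single q 1) s t = 0 := by
  unfold symOf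
  split_ifs with h h'
  · exact (single_one_apply_offI q _).trans (if_neg hst)
  · exact (single_one_apply_offI q _).trans (if_neg hts)
  · rfl

lemma symOf_single (q : OffI n m c) :
    symOf (Pi.single q 1) = single q.1.1 q.1.2 (1 : ℝ) + single q.1.2 q.1.1 1 := by
  have hne : q.1.1 ≠ q.1.2 := Fin.ne_of_lt q.2.1
  ext s t
  simp only [Matrix.add_apply, single_apply]
  by_cases h₁ : q.1.1 = s ∧ q.1.2 = t
  · obtain ⟨rfl, rfl⟩ := h₁
    rw [symOf_apply_val, Pi.single_eq_same, if_pos ⟨rfl, rfl⟩, if_neg fun h => hne h.2, add_zero]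
  by_cases h₂ : q.1.2 = s ∧ q.1.1 = t
  · obtain ⟨rfl, rfl⟩ := h₂
    rw [symOf_apply_val_swap, Pi.single_eq_same, if_neg h₁, if_pos ⟨rfl, rfl⟩, zero_add]
  rw [symOf_single_apply_of_ne q (fun h => h₁ (by simp [← h])) (fun h => h₂ (by simp [← h])),
    if_neg h₁, if_neg h₂, add_zero]

lemma annih_apply (U : Matrix (Fin n) (Fin n) ℝ) (p q : OffI n m c) :
    annih n m c i j U p q = if inPiv c i j p.1.1 ∧ inPiv c i j p.1.2 then 0
      else U q.1.1 p.1.1 * U q.1.2 p.1.2 + U q.1.2 p.1.1 * U q.1.1 p.1.2 := by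
  rw [annih, nij, symOf_single, Matrix.mul_add, Matrix.add_mul, Matrix.add_apply,
    transpose_mul_single_mul_apply, transpose_mul_single_mul_apply]

lemma annih_transpose {U : Matrix (Fin n) (Fin n) ℝ} (hU : IsElem c i j U) :
    (annih n m c i j U)ᵀ = annih n m c i j Uᵀ := by
  ext p q
  simp only [transpose_apply, annih_apply]
  -- where only one mask applies, each product has an entry linking a pivot to a non-pivot index
  split_ifs with hq hp hp
  · rfl
  · rcases not_and_or.mp hp with h | h <;> simp [hU.apply_eq_zero, h, hq]
  · rcases not_and_or.mp hq with h | h <;> simp [hU.apply_eq_zero, h, hp]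
  · ring

lemma transpose_mem_IijUBC {ρ : ℝ} {R : Matrix (OffI n m c) (OffI n m c) ℝ}
    (hR : R ∈ IijUBC n m c ρ i j) : Rᵀ ∈ IijUBC n m c ρ i j := by
  obtain ⟨U, hU, rfl⟩ := hR
  exact ⟨Uᵀ, hU.transpose, annih_transpose hU.1⟩

end Annihilator

lemma transpose_mem_JopUBC_of_mem_reverse {n m : ℕ} {c : ℕ → ℕ} {ρ : ℝ} {L : List (ℕ × ℕ)}
    {J : Matrix (OffI n m c) (OffI n m c) ℝ} (hJ : J ∈ JopUBC n m c ρ L.reverse) :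
    Jᵀ ∈ JopUBC n m c ρ L := by
  obtain ⟨R, hR, rfl⟩ := hJ
  refine ⟨fun k => (R (L.length - 1 - k))ᵀ, fun k hk => ?_, ?_⟩
  · have hk' : L.length - 1 - k < L.reverse.length := by
      rw [List.length_reverse]; omega
    have hpair : L.reverse.get ⟨L.length - 1 - k, hk'⟩ = L.get ⟨k, hk⟩ := by
      simp only [List.get_eq_getElem, List.getElem_reverse]
      congr 1
      omega
    exact transpose_mem_IijUBC (hpair ▸ hR _ hk')
  · rw [transpose_list_prod]
    congr 1
    apply List.ext_getElem
    · simp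
    · intro k h1 h2
      simp only [List.getElem_reverse, List.getElem_map, List.getElem_range,
        List.length_reverse, List.length_map, List.length_range] at *

theorem statement18_general (n m : ℕ) (c : ℕ → ℕ) (ρ : ℝ) (L : List (ℕ × ℕ)) (μ : ℝ) :
    ((∀ J ∈ JopUBC n m c ρ L, specNorm J ≤ μ) →
      ∀ J ∈ JopUBC n m c ρ L.reverse, specNorm J ≤ μ) ∧
    ((∀ J ∈ JopUBC n m c ρ L, specRad J ≤ μ) →
      ∀ J ∈ JopUBC n m c ρ L.reverse, specRad J ≤ μ) :=
  ⟨fun H J hJ => specNorm_transpose J ▸ H _ (transpose_mem_JopUBC_of_mem_reverse hJ),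
    fun H J hJ => specRad_transpose J ▸ H _ (transpose_mem_JopUBC_of_mem_reverse hJ)⟩

/-- Proposition 2.17: a uniform spectral norm bound for the block Jacobi
operators of `O` transfers to the block Jacobi operators of the reverse ordering `O^←`;
the same holds for the spectral radius. -/
theorem statement18 (n m : ℕ) (c : ℕ → ℕ) (hpart : IsPartition n m c)
    (ρ : ℝ) (hρ0 : 0 < ρ) (hρ1 : ρ ≤ 1)
    (L : List (ℕ × ℕ)) (hL : SeqOn m L) (μ : ℝ) :
    ((∀ J ∈ JopUBC n m c ρ L, specNorm J ≤ μ) →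
      ∀ J ∈ JopUBC n m c ρ L.reverse, specNorm J ≤ μ) ∧
    ((∀ J ∈ JopUBC n m c ρ L, specRad J ≤ μ) →
      ∀ J ∈ JopUBC n m c ρ L.reverse, specRad J ≤ μ) :=
  statement18_general n m c ρ L μ
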